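/- Orderly Queues Relation: let P₁, P₂, P₃ be non-collinear points of ℝ² with dist(P₃,P₁) = dist(P₃,P₂), and define P_n for n ≥ 4 recursively as the circumcenter of P_{n−1}, P_{n−2}, P_{n−3}, assuming that each consecutive triple P_{n−3}, P_{n−2}, P_{n−1} is non-collinear so that the recursion is well defined. Then there exists a point P_∞ ∈ ℝ² such that: (1) for each r ∈ {1,2,3,4}, the set {P_∞} ∪ {P_{r+4k} : k ∈ ℕ} is collinear (all the points P_r, P_{r+4}, P_{r+8}, … lie on a single line through P_∞); and (2) for every n ≥ 1 the vectors P_n − P_∞ and P_{n+2} − P_∞ are perpendicular (their inner product is zero), so in particular the lines containing {P_{1+4k}} and {P_{3+4k}} are perpendicular, as are the lines containing {P_{2+4k}} and {P_{4+4k}}. -/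

import Mathlib

/-!
Identify the plane with `ℂ`. Because `P₃` and `P₄` both lie on the perpendicular bisector of
`P₁P₂`, the similarity `f x = t * I * x + β` with `f P₁ = P₃`, `f P₂ = P₄` is a rotation by a right
angle followed by a homothety, and a short computation with the isosceles hypothesis gives
`f P₃ = P₅`. A similarity maps circumcentres to circumcentres and the circumcentre of a
non-collinear triple is unique, so `f Pₙ = Pₙ₊₂` for all `n`. With `z` the fixed point of `f`,
`Pₙ₊₂ - z = t i (Pₙ - z)`: this is orthogonal to `Pₙ - z`, and `Pₙ₊₄ - z = -t² (Pₙ - z)`.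
-/

open Module

def IsCircumcenter {X : Type*} [Dist X] (o a b c : X) : Prop :=
  dist o a = dist o b ∧ dist o a = dist o c

theorem IsCircumcenter.map {X Y : Type*} [Dist X] [Dist Y] {f : X → Y} {k : ℝ}
    (hf : ∀ x y, dist (f x) (f y) = k * dist x y) {o a b c : X} (h : IsCircumcenter o a b c) :
    IsCircumcenter (f o) (f a) (f b) (f c) :=
  ⟨by rw [hf, hf, h.1], by rw [hf, hf, h.2]⟩

theorem Collinear.image {k V₁ V₂ P₁ P₂ : Type*} [Field k] [AddCommGroup V₁] [Module k V₁]
    [AddTorsor V₁ P₁] [AddCommGroup V₂] [Module k V₂] [AddTorsor V₂ P₂] {s : Set P₁}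
    (h : Collinear k s) (f : P₁ →ᵃ[k] P₂) : Collinear k (f '' s) := by
  rw [Collinear, ← AffineMap.map_vectorSpan]
  simpa using (lift_rank_map_le f.linear (vectorSpan k s)).trans (Cardinal.lift_le.2 h)

section Plane

variable {V P : Type*} [NormedAddCommGroup V] [InnerProductSpace ℝ V] [FiniteDimensional ℝ V]
  [MetricSpace P] [NormedAddTorsor V P]

theorem IsCircumcenter.eq (hd : finrank ℝ V = 2) {o o' a b c : P}
    (hnc : ¬Collinear ℝ {c, b, a}) (ho : IsCircumcenter o a b c)
    (ho' : IsCircumcenter o' a b c) : o = o' := by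
  by_contra hne
  rcases EuclideanGeometry.eq_of_dist_eq_of_dist_eq_of_finrank_eq_two hd hne
    (ne₂₃_of_not_collinear hnc).symm
    (dist_comm a o) (by rw [dist_comm, ← ho.1]) (by rw [dist_comm, ← ho.2])
    (dist_comm a o') (by rw [dist_comm, ← ho'.1]) (by rw [dist_comm, ← ho'.2]) with h | h
  · exact ne₁₃_of_not_collinear hnc h
  · exact ne₁₂_of_not_collinear hnc h

theorem eq_map_of_isCircumcenter (hd : finrank ℝ V = 2) {Q : ℕ → P} {f : P → P} {k : ℝ}
    (hf : ∀ x y, dist (f x) (f y) = k * dist x y)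
    (hQ : ∀ n, IsCircumcenter (Q (n + 3)) (Q (n + 2)) (Q (n + 1)) (Q n))
    (hnc : ∀ n, ¬Collinear ℝ {Q n, Q (n + 1), Q (n + 2)})
    (h₀ : Q 2 = f (Q 0)) (h₁ : Q 3 = f (Q 1)) (h₂ : Q 4 = f (Q 2)) (n : ℕ) :
    Q (n + 2) = f (Q n) := by
  suffices ∀ n, Q (n + 2) = f (Q n) ∧ Q (n + 3) = f (Q (n + 1)) ∧ Q (n + 4) = f (Q (n + 2)) from
    (this n).1
  intro n
  induction n with
  | zero => exact ⟨h₀, h₁, h₂⟩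
  | succ n ih =>
    obtain ⟨e₀, e₁, e₂⟩ := ih
    refine ⟨e₁, e₂, (hQ (n + 2)).eq hd (hnc (n + 2)) ?_⟩
    have := (hQ n).map hf
    rwa [← e₂, ← e₁, ← e₀] at this

end Plane

namespace Complex

theorem dist_eq_dist_iff_normSq_eq {u w w' x y x' y' : ℂ} (hu : u ≠ 0) (hw : x - y = u * w)
    (hw' : x' - y' = u * w') : dist x y = dist x' y' ↔ normSq w = normSq w' := by
  rw [dist_eq, dist_eq, hw, hw', norm_mul, norm_mul, mul_right_inj' (norm_ne_zero_iff.2 hu),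
    ← sq_eq_sq₀ (norm_nonneg _) (norm_nonneg _), Complex.sq_norm, Complex.sq_norm]

theorem dist_mul_add_mul_add (c β x y : ℂ) : dist (c * x + β) (c * y + β) = ‖c‖ * dist x y := by
  rw [dist_eq, dist_eq, ← norm_mul]
  congr 1
  ring

theorem exists_eq_midpoint_add_of_dist_eq {A B X : ℂ} (hAB : A ≠ B) (h : dist X A = dist X B) :
    ∃ s : ℝ, X = (A + B) / 2 + s * I * (B - A) := by
  have hu : B - A ≠ 0 := sub_ne_zero.2 hAB.symm
  set w := (X - (A + B) / 2) / (B - A)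
  have hX : X = (A + B) / 2 + (B - A) * (w.re + w.im * I) := by
    rw [re_add_im, mul_div_cancel₀ _ hu]
    ring
  have hw := (dist_eq_dist_iff_normSq_eq hu (w := (w.re + 1 / 2 : ℝ) + w.im * I)
    (w' := (w.re - 1 / 2 : ℝ) + w.im * I) (by rw [hX]; push_cast; ring)
    (by rw [hX]; push_cast; ring)).1 h
  rw [normSq_add_mul_I, normSq_add_mul_I] at hw
  have hre : w.re = 0 := by linarith
  exact ⟨w.im, by rw [hX, hre]; push_cast; ring⟩

theorem exists_spiral_similarity_of_isCircumcenter {A B C D E : ℂ} (hAB : A ≠ B)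
    (hC : dist C A = dist C B) (hD : IsCircumcenter D C B A) (hE : IsCircumcenter E D C B)
    (hnc : ¬Collinear ℝ {B, C, D}) :
    ∃ (t : ℝ) (β : ℂ), C = t * I * A + β ∧ D = t * I * B + β ∧ E = t * I * C + β := by
  have hu : B - A ≠ 0 := sub_ne_zero.2 hAB.symm
  obtain ⟨p, hp⟩ := exists_eq_midpoint_add_of_dist_eq hAB hC
  obtain ⟨q, hq⟩ := exists_eq_midpoint_add_of_dist_eq hAB (hD.2.symm.trans hD.1)
  have hDC_DA : p ^ 2 - 2 * p * q = 1 / 4 := by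
    have h := (dist_eq_dist_iff_normSq_eq hu (w := (0 : ℝ) + (q - p : ℝ) * I)
      (w' := (1 / 2 : ℝ) + q * I) (by rw [hp, hq]; push_cast; ring)
      (by rw [hq]; push_cast; ring)).1 hD.2
    rw [normSq_add_mul_I, normSq_add_mul_I] at h
    linear_combination h
  set f : ℂ → ℂ := fun x => (q - p : ℝ) * I * x + (C - (q - p : ℝ) * I * A)
  have hfA : C = f A := by ring
  have hfB : D = f B := by simp only [f]; rw [hp, hq]; push_cast; ring
  have hf : ∀ x y, dist (f x) (f y) = ‖((q - p : ℝ) : ℂ) * I‖ * dist x y :=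
    dist_mul_add_mul_add _ _
  have hCB : dist (f C) C = dist (f C) B := by
    refine (dist_eq_dist_iff_normSq_eq hu (w := (-(q - p) * p : ℝ) + ((q - p) / 2 : ℝ) * I)
      (w' := (-(q - p) * p - 1 / 2 : ℝ) + ((q - p) / 2 + p : ℝ) * I) ?_ ?_).2 ?_
    · simp only [f]; rw [hp]; push_cast; linear_combination (q - p) * p * (B - A) * I_sq
    · simp only [f]; rw [hp]; push_cast; linear_combination (q - p) * p * (B - A) * I_sq
    · rw [normSq_add_mul_I, normSq_add_mul_I]
      linear_combination hDC_DA
  have hfC : IsCircumcenter (f C) D C B := by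
    have hDC : dist (f C) D = dist (f C) C := by rw [hfB, hf, ← hC, ← hf, ← hfA]
    exact ⟨hDC, hDC.trans hCB⟩
  exact ⟨q - p, C - (q - p : ℝ) * I * A, hfA, hfB, hE.eq finrank_real_complex hnc hfC⟩

theorem exists_spiral_center {Q : ℕ → ℂ} (hiso : dist (Q 2) (Q 0) = dist (Q 2) (Q 1))
    (hQ : ∀ n, IsCircumcenter (Q (n + 3)) (Q (n + 2)) (Q (n + 1)) (Q n))
    (hnc : ∀ n, ¬Collinear ℝ {Q n, Q (n + 1), Q (n + 2)}) :
    ∃ (t : ℝ) (z : ℂ), ∀ n, Q (n + 2) - z = t * I * (Q n - z) := by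
  obtain ⟨t, β, h₀, h₁, h₂⟩ := exists_spiral_similarity_of_isCircumcenter
    (ne₁₂_of_not_collinear (hnc 0)) hiso (hQ 0) (hQ 1) (hnc 1)
  have hQf := eq_map_of_isCircumcenter finrank_real_complex (dist_mul_add_mul_add (t * I) β)
    hQ hnc h₀ h₁ h₂
  have ht : 1 - t * I ≠ 0 := fun h => by simpa using congrArg re h
  refine ⟨t, β / (1 - t * I), fun n => ?_⟩
  rw [hQf n]
  field_simp
  ring

theorem collinear_of_spiral {Q : ℕ → ℂ} {t : ℝ} {z : ℂ}
    (hQ : ∀ n, Q (n + 2) - z = t * I * (Q n - z)) (r : ℕ) :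
    Collinear ℝ (insert z {x | ∃ k : ℕ, x = Q (r + 4 * k)}) := by
  have h4 : ∀ k, Q (r + 4 * k) - z = ((-t ^ 2) ^ k : ℝ) • (Q r - z) := by
    intro k
    induction k with
    | zero => simp
    | succ k ih =>
      rw [show r + 4 * (k + 1) = r + 4 * k + 2 + 2 by ring, hQ, hQ, ih, real_smul, real_smul]
      push_cast
      linear_combination (t ^ 2 * (-t ^ 2) ^ k * (Q r - z)) * I_sq
  rw [collinear_iff_of_mem (Set.mem_insert _ _)]
  refine ⟨Q r - z, ?_⟩
  rintro _ (rfl | ⟨k, rfl⟩)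
  · exact ⟨0, by simp⟩
  · exact ⟨(-t ^ 2) ^ k, by rw [← h4, vadd_eq_add, sub_add_cancel]⟩

theorem inner_eq_zero_of_spiral {Q : ℕ → ℂ} {t : ℝ} {z : ℂ}
    (hQ : ∀ n, Q (n + 2) - z = t * I * (Q n - z)) (n : ℕ) :
    inner ℝ (Q n - z) (Q (n + 2) - z) = 0 := by
  rw [hQ, Complex.inner, mul_assoc, mul_conj]
  simp

end Complex

theorem orderly_queues_relation (P : ℕ → EuclideanSpace ℝ (Fin 2))
    (hiso : dist (P 3) (P 1) = dist (P 3) (P 2))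
    (hnc : ∀ n, 4 ≤ n →
      ¬ Collinear ℝ ({P (n - 3), P (n - 2), P (n - 1)} : Set (EuclideanSpace ℝ (Fin 2))))
    (hrec : ∀ n, 4 ≤ n →
      dist (P n) (P (n - 1)) = dist (P n) (P (n - 2)) ∧
      dist (P n) (P (n - 1)) = dist (P n) (P (n - 3))) :
    ∃ Pinf : EuclideanSpace ℝ (Fin 2),
      (∀ r, 1 ≤ r → r ≤ 4 →
        Collinear ℝ (insert Pinf {x | ∃ k : ℕ, x = P (r + 4 * k)})) ∧
      (∀ n, 1 ≤ n → (inner ℝ (P n - Pinf) (P (n + 2) - Pinf) : ℝ) = 0) := by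
  let e : ℂ ≃ₗᵢ[ℝ] EuclideanSpace ℝ (Fin 2) := Complex.orthonormalBasisOneI.repr
  let φ := (e : ℂ →ₗ[ℝ] EuclideanSpace ℝ (Fin 2)).toAffineMap
  let Q n := e.symm (P (n + 1))
  have hP : ∀ n, P (n + 1) = e (Q n) := by simp [Q]
  obtain ⟨t, z, hQ⟩ := Complex.exists_spiral_center (Q := Q) (by simpa [Q] using hiso)
    (fun n => by simpa [Q, IsCircumcenter] using hrec (n + 4) (by omega))
    (fun n h => hnc (n + 4) (by omega) (by simpa [φ, Set.image_insert_eq, hP] using h.image φ))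
  refine ⟨e z, fun r hr _ => ?_, fun n hn => ?_⟩
  · obtain ⟨r, rfl⟩ := Nat.exists_eq_add_of_le' hr
    have hS : {x | ∃ k : ℕ, x = P (r + 1 + 4 * k)} = φ '' {x | ∃ k : ℕ, x = Q (r + 4 * k)} := by
      ext x
      simp [φ, hP, show ∀ k, r + 1 + 4 * k = r + 4 * k + 1 by omega, eq_comm]
    simpa [hS, Set.image_insert_eq, φ] using (Complex.collinear_of_spiral hQ r).image φ
  · obtain ⟨n, rfl⟩ := Nat.exists_eq_add_of_le' hn
    rw [hP, show n + 1 + 2 = n + 2 + 1 by omega, hP, ← map_sub, ← map_sub, e.inner_map_map]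
    exact Complex.inner_eq_zero_of_spiral hQ n
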